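/- arXiv:math/0202295 — 2 statements merged into one kernel-verified Lean document; each statement's English description precedes it below -/
import Mathlib

section
/- The map sending each hexagonal cell to the pair of square cells whose diagonally opposite corners lie in that hexagon defines a bijection between hexagonal lattice animals with n cells and parity polyominoes with 2n square cells. -/
/-- Adjacency of hexagonal cells, in axial coordinates: each cell has six neighbours. -/
def HexAdj (a b : ℤ × ℤ) : Prop :=
  b - a ∈ ({(1,0), (-1,0), (0,1), (0,-1), (1,-1), (-1,1)} : Set (ℤ × ℤ))

/-- A hexagonal lattice animal with `n` cells: a nonempty, edge-connected set of `n`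
hexagonal cells. -/
def IsHexAnimal (n : ℕ) (S : Finset (ℤ × ℤ)) : Prop :=
  S.card = n ∧ S.Nonempty ∧
    ∀ a ∈ S, ∀ b ∈ S,
      Relation.ReflTransGen (fun p q => p ∈ S ∧ q ∈ S ∧ HexAdj p q) a b

/-- Translation of a set of cells by a lattice vector. -/
def translateSet (v : ℤ × ℤ) (S : Finset (ℤ × ℤ)) : Finset (ℤ × ℤ) :=
  S.image fun p => p + v

/-- Two sets of cells are equivalent when one is a translate of the other. -/
def TransEquiv (S T : Finset (ℤ × ℤ)) : Prop := ∃ v, translateSet v S = T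

/-- The number of hexagonal lattice animals with `n` cells, up to translation. -/
noncomputable def hexCount (n : ℕ) : ℕ :=
  Nat.card (Quot (fun S T : {S : Finset (ℤ × ℤ) // IsHexAnimal n S} => TransEquiv S.1 T.1))

/-- The doubling map: each hexagonal cell `(x, y)` is replaced by the vertical domino of
the two square cells `(x, x + 2y)` and `(x, x + 2y + 1)`, so adjacent hexagonal columns
are vertically offset by one square unit. -/
def hexToSq (S : Finset (ℤ × ℤ)) : Finset (ℤ × ℤ) :=
  S.biUnion fun p => {(p.1, p.1 + 2 * p.2), (p.1, p.1 + 2 * p.2 + 1)}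

/-- Adjacency of square lattice cells. -/
def SqAdj (a b : ℤ × ℤ) : Prop :=
  b - a ∈ ({(1,0), (-1,0), (0,1), (0,-1)} : Set (ℤ × ℤ))

/-- A (square-lattice) polyomino: a nonempty edge-connected set of square cells. -/
def IsPolyomino (S : Finset (ℤ × ℤ)) : Prop :=
  S.Nonempty ∧
    ∀ a ∈ S, ∀ b ∈ S,
      Relation.ReflTransGen (fun p q => p ∈ S ∧ q ∈ S ∧ SqAdj p q) a b

/-- A parity polyomino: a square-lattice polyomino such that in each column there is a
parity `ε x` for which the cells of the column pair up into vertical dominoes whose lower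
cells have `y ≡ ε x (mod 2)` (equivalently, every maximal vertical run has even length and
all runs of a column start at `y`-coordinates of the same parity `ε x`), and the parities
of adjacent (occupied) columns differ. -/
def IsParityPoly (S : Finset (ℤ × ℤ)) : Prop :=
  IsPolyomino S ∧
    ∃ ε : ℤ → ℤ,
      (∀ x y : ℤ, (x, y) ∈ S →
        ((y - ε x) % 2 = 0 → (x, y + 1) ∈ S) ∧ ((y - ε x) % 2 ≠ 0 → (x, y - 1) ∈ S)) ∧
      (∀ x : ℤ, (∃ y, (x, y) ∈ S) → (∃ y, (x + 1, y) ∈ S) → (ε (x + 1) - ε x) % 2 ≠ 0)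

/-!
A hexagonal cell `(x, k)` becomes the domino `(x, x + 2k), (x, x + 2k + 1)`, and conversely the
square cell `(x, y)` lies in the domino of `(x, ⌊(y - x) / 2⌋)`. So `hexToSq S` is the preimage
of `S` under this projection, which makes the doubling map injective and turns square adjacency
into hexagonal adjacency (or equality); a hexagonal step is in turn realised by two square steps
through a shared domino edge. Hence connectivity passes both ways. Translations by `(a, b)` with
`b - a` even commute with doubling, and an odd vertical shift cannot map dominoes to dominoes
(look at the lowest domino). Finally, in a parity polyomino `ε x - x` has constant parity along
paths, so after a vertical shift `ε x ≡ x (mod 2)` and the polyomino is a union of the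
dominoes of its projection.
-/

open Finset Relation

def sqToHex (c : ℤ × ℤ) : ℤ × ℤ := (c.1, (c.2 - c.1) / 2)

@[simp]
lemma sqToHex_mk (x y : ℤ) : sqToHex (x, y) = (x, (y - x) / 2) := rfl

lemma sqToHex_lower (x k : ℤ) : sqToHex (x, x + 2 * k) = (x, k) := by
  simp only [sqToHex_mk, Prod.mk.injEq, true_and]; omega

lemma sqToHex_upper (x k : ℤ) : sqToHex (x, x + 2 * k + 1) = (x, k) := by
  simp only [sqToHex_mk, Prod.mk.injEq, true_and]; omega

lemma mem_hexToSq {S : Finset (ℤ × ℤ)} {c : ℤ × ℤ} : c ∈ hexToSq S ↔ sqToHex c ∈ S := by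
  obtain ⟨x, y⟩ := c
  simp only [hexToSq, mem_biUnion, mem_insert, mem_singleton, sqToHex_mk]
  constructor
  · rintro ⟨⟨a, k⟩, hk, h | h⟩ <;>
    · simp only [Prod.mk.injEq] at h
      obtain ⟨rfl, rfl⟩ := h
      convert hk using 2; omega
  · exact fun h => ⟨_, h, by simp only [Prod.mk.injEq, true_and]; omega⟩

lemma card_hexToSq (S : Finset (ℤ × ℤ)) : (hexToSq S).card = 2 * S.card := by
  rw [hexToSq, card_biUnion, sum_const_nat fun p _ => ?_, mul_comm]
  · rw [card_pair]; simp
  · intro p _ q _ hpq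
    simp only [disjoint_left, mem_insert, mem_singleton]
    rintro c (rfl | rfl) h <;> apply hpq <;> simp only [Prod.ext_iff] at h ⊢ <;> omega

lemma hexToSq_injective : Function.Injective hexToSq := by
  intro S T h
  ext ⟨x, k⟩
  rw [← sqToHex_lower, ← mem_hexToSq, ← mem_hexToSq, h]

lemma mem_translateSet {v : ℤ × ℤ} {S : Finset (ℤ × ℤ)} {p : ℤ × ℤ} :
    p ∈ translateSet v S ↔ p - v ∈ S := by
  simp [translateSet, ← sub_eq_add_neg]

lemma translateSet_translateSet (v w : ℤ × ℤ) (S : Finset (ℤ × ℤ)) :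
    translateSet w (translateSet v S) = translateSet (v + w) S := by
  ext p; simp [mem_translateSet, sub_sub, add_comm]

lemma translateSet_zero (S : Finset (ℤ × ℤ)) : translateSet 0 S = S := by
  ext p; simp [mem_translateSet]

lemma hexToSq_translateSet (a k : ℤ) (S : Finset (ℤ × ℤ)) :
    hexToSq (translateSet (a, k) S) = translateSet (a, a + 2 * k) (hexToSq S) := by
  ext ⟨x, y⟩
  simp only [mem_hexToSq, mem_translateSet, sqToHex_mk, Prod.mk_sub_mk]
  convert Iff.rfl using 3; omega

lemma sqAdj_mk_iff {x y x' y' : ℤ} :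
    SqAdj (x, y) (x', y') ↔
      x' - x = 1 ∧ y' = y ∨ x' - x = -1 ∧ y' = y ∨ x' = x ∧ y' - y = 1 ∨ x' = x ∧ y' - y = -1 := by
  simp only [SqAdj, Set.mem_insert_iff, Set.mem_singleton_iff, Prod.mk_sub_mk, Prod.mk.injEq]
  omega

lemma hexAdj_mk_iff {x k x' k' : ℤ} :
    HexAdj (x, k) (x', k') ↔
      x' - x = 1 ∧ k' = k ∨ x' - x = -1 ∧ k' = k ∨ x' = x ∧ k' - k = 1 ∨ x' = x ∧ k' - k = -1 ∨
        x' - x = 1 ∧ k' - k = -1 ∨ x' - x = -1 ∧ k' - k = 1 := by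
  simp only [HexAdj, Set.mem_insert_iff, Set.mem_singleton_iff, Prod.mk_sub_mk, Prod.mk.injEq]
  omega

lemma sqToHex_eq_or_hexAdj_of_sqAdj {c d : ℤ × ℤ} (h : SqAdj c d) :
    sqToHex c = sqToHex d ∨ HexAdj (sqToHex c) (sqToHex d) := by
  obtain ⟨x, y⟩ := c
  obtain ⟨x', y'⟩ := d
  rw [sqAdj_mk_iff] at h
  simp only [sqToHex_mk, hexAdj_mk_iff, Prod.mk.injEq]
  omega

lemma sqAdj_dominoes_of_hexAdj {x k x' k' : ℤ} (h : HexAdj (x, k) (x', k')) :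
    SqAdj (x, x + 2 * k + 1) (x', x' + 2 * k') ∨ SqAdj (x, x + 2 * k) (x', x' + 2 * k' + 1) := by
  rw [hexAdj_mk_iff] at h
  simp only [sqAdj_mk_iff]
  omega

section Connectivity

variable {S : Finset (ℤ × ℤ)}

lemma hexConnected_of_isPolyomino_hexToSq (hS : IsPolyomino (hexToSq S)) :
    ∀ a ∈ S, ∀ b ∈ S, ReflTransGen (fun p q => p ∈ S ∧ q ∈ S ∧ HexAdj p q) a b := by
  rintro ⟨x, k⟩ ha ⟨x', k'⟩ hb
  have hpath := hS.2 (x, x + 2 * k) (by rwa [mem_hexToSq, sqToHex_lower])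
    (x', x' + 2 * k') (by rwa [mem_hexToSq, sqToHex_lower])
  rw [← sqToHex_lower x k, ← sqToHex_lower x' k']
  refine hpath.lift' sqToHex fun c d ⟨hc, hd, hcd⟩ => ?_
  rw [mem_hexToSq] at hc hd
  rcases sqToHex_eq_or_hexAdj_of_sqAdj hcd with h | h
  · show ReflTransGen _ (sqToHex c) (sqToHex d)
    rw [h]
  · exact .single ⟨hc, hd, h⟩

lemma lower_mem_hexToSq {x k : ℤ} (h : (x, k) ∈ S) : (x, x + 2 * k) ∈ hexToSq S := by
  rwa [mem_hexToSq, sqToHex_lower]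

lemma upper_mem_hexToSq {x k : ℤ} (h : (x, k) ∈ S) : (x, x + 2 * k + 1) ∈ hexToSq S := by
  rwa [mem_hexToSq, sqToHex_upper]

lemma reflTransGen_lower_of_mem_hexToSq {x y : ℤ} (h : (x, y) ∈ hexToSq S) :
    ∃ k, (x, k) ∈ S ∧
      ReflTransGen (fun c d => c ∈ hexToSq S ∧ d ∈ hexToSq S ∧ SqAdj c d) (x, y) (x, x + 2 * k) ∧
      ReflTransGen (fun c d => c ∈ hexToSq S ∧ d ∈ hexToSq S ∧ SqAdj c d)
        (x, x + 2 * k) (x, y) := by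
  obtain ⟨k, rfl | rfl⟩ : ∃ k, y = x + 2 * k ∨ y = x + 2 * k + 1 := ⟨(y - x) / 2, by omega⟩
  · exact ⟨k, by rwa [mem_hexToSq, sqToHex_lower] at h, .refl, .refl⟩
  · have hk : (x, k) ∈ S := by rwa [mem_hexToSq, sqToHex_upper] at h
    exact ⟨k, hk, .single ⟨h, lower_mem_hexToSq hk, sqAdj_mk_iff.2 (by omega)⟩,
      .single ⟨lower_mem_hexToSq hk, h, sqAdj_mk_iff.2 (by omega)⟩⟩

lemma reflTransGen_lower_of_hexAdj {x k x' k' : ℤ} (hp : (x, k) ∈ S) (hq : (x', k') ∈ S)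
    (h : HexAdj (x, k) (x', k')) :
    ReflTransGen (fun c d => c ∈ hexToSq S ∧ d ∈ hexToSq S ∧ SqAdj c d)
      (x, x + 2 * k) (x', x' + 2 * k') := by
  rcases sqAdj_dominoes_of_hexAdj h with h | h
  · exact .head ⟨lower_mem_hexToSq hp, upper_mem_hexToSq hp, sqAdj_mk_iff.2 (by omega)⟩
      (.single ⟨upper_mem_hexToSq hp, lower_mem_hexToSq hq, h⟩)
  · exact .head ⟨lower_mem_hexToSq hp, upper_mem_hexToSq hq, h⟩
      (.single ⟨upper_mem_hexToSq hq, lower_mem_hexToSq hq, sqAdj_mk_iff.2 (by omega)⟩)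

lemma isPolyomino_hexToSq (hne : S.Nonempty)
    (hS : ∀ a ∈ S, ∀ b ∈ S, ReflTransGen (fun p q => p ∈ S ∧ q ∈ S ∧ HexAdj p q) a b) :
    IsPolyomino (hexToSq S) := by
  obtain ⟨⟨x₀, k₀⟩, h₀⟩ := hne
  refine ⟨⟨_, lower_mem_hexToSq h₀⟩, ?_⟩
  rintro ⟨x, y⟩ ha ⟨x', y'⟩ hb
  obtain ⟨k, hk, hak, -⟩ := reflTransGen_lower_of_mem_hexToSq ha
  obtain ⟨k', hk', -, hkb⟩ := reflTransGen_lower_of_mem_hexToSq hb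
  have hlower := (hS _ hk _ hk').lift' (fun p => (p.1, p.1 + 2 * p.2))
    fun _ _ ⟨hp, hq, hpq⟩ => reflTransGen_lower_of_hexAdj hp hq hpq
  exact (hak.trans hlower).trans hkb

end Connectivity

lemma isHexAnimal_iff {n : ℕ} {S : Finset (ℤ × ℤ)} :
    IsHexAnimal n S ↔ IsPolyomino (hexToSq S) ∧ (hexToSq S).card = 2 * n := by
  rw [card_hexToSq]
  constructor
  · rintro ⟨hcard, hne, hS⟩
    exact ⟨isPolyomino_hexToSq hne hS, by rw [hcard]⟩
  · rintro ⟨hP, hcard⟩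
    obtain ⟨c, hc⟩ := hP.1
    exact ⟨by omega, ⟨_, mem_hexToSq.1 hc⟩, hexConnected_of_isPolyomino_hexToSq hP⟩

lemma isParityPoly_hexToSq {S : Finset (ℤ × ℤ)} (hS : IsPolyomino (hexToSq S)) :
    IsParityPoly (hexToSq S) := by
  refine ⟨hS, id, fun x y hxy => ?_, fun x _ _ => by simp⟩
  rw [mem_hexToSq, sqToHex_mk] at hxy
  simp only [id_eq, mem_hexToSq, sqToHex_mk]
  constructor <;> intro <;> convert hxy using 2 <;> omega

lemma even_of_translateSet_hexToSq {S T : Finset (ℤ × ℤ)} {a b : ℤ} (hS : S.Nonempty)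
    (h : translateSet (a, b) (hexToSq S) = hexToSq T) : (b - a) % 2 = 0 := by
  have hmem : ∀ c, c ∈ hexToSq S ↔ sqToHex (c + (a, b)) ∈ T := fun c => by
    rw [← mem_hexToSq, ← h, mem_translateSet, add_sub_cancel_right]
  obtain ⟨⟨x, k⟩, hp, hmin⟩ := S.exists_min_image Prod.snd hS
  by_contra hodd
  -- an odd shift takes the lower cell of the lowest domino to an upper cell, whose partner below
  -- must then come from a domino under it
  have hbelow : (x, x + 2 * k - 1) ∈ hexToSq S := by
    rw [hmem]
    convert (hmem _).1 (lower_mem_hexToSq hp) using 1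
    simp only [Prod.mk_add_mk, sqToHex_mk, Prod.mk.injEq, true_and]
    omega
  have := hmin _ (mem_hexToSq.1 hbelow)
  simp only [sqToHex_mk] at this
  omega

lemma transEquiv_of_transEquiv_hexToSq {S T : Finset (ℤ × ℤ)}
    (h : TransEquiv (hexToSq S) (hexToSq T)) : TransEquiv S T := by
  obtain ⟨⟨a, b⟩, h⟩ := h
  rcases S.eq_empty_or_nonempty with rfl | hS
  · have : hexToSq T = hexToSq ∅ := by rw [← h]; rfl
    exact ⟨0, by rw [hexToSq_injective this]; rfl⟩
  · obtain ⟨k, rfl⟩ : ∃ k, b = a + 2 * k :=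
      ⟨(b - a) / 2, by have := even_of_translateSet_hexToSq hS h; omega⟩
    exact ⟨(a, k), hexToSq_injective (by rw [hexToSq_translateSet, h])⟩

lemma card_translateSet (v : ℤ × ℤ) (T : Finset (ℤ × ℤ)) : (translateSet v T).card = T.card :=
  card_image_of_injective _ (add_left_injective v)

lemma IsPolyomino.translateSet {T : Finset (ℤ × ℤ)} (hT : IsPolyomino T) (v : ℤ × ℤ) :
    IsPolyomino (translateSet v T) := by
  obtain ⟨⟨p, hp⟩, hT⟩ := hT
  refine ⟨⟨p + v, by simpa [mem_translateSet]⟩, fun a ha b hb => ?_⟩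
  rw [mem_translateSet] at ha hb
  simpa [Function.onFun] using (hT _ ha _ hb).lift (· + v)
    (p := fun c d => c ∈ _root_.translateSet v T ∧ d ∈ _root_.translateSet v T ∧ SqAdj c d)
    fun c d ⟨hc, hd, hcd⟩ =>
      ⟨by simpa [mem_translateSet], by simpa [mem_translateSet], by simpa [SqAdj]⟩

lemma hexToSq_image_sqToHex {T : Finset (ℤ × ℤ)}
    (hT : ∀ x y, (x, y) ∈ T →
      ((y - x) % 2 = 0 → (x, y + 1) ∈ T) ∧ ((y - x) % 2 ≠ 0 → (x, y - 1) ∈ T)) :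
    hexToSq (T.image sqToHex) = T := by
  ext ⟨x, y⟩
  simp only [mem_hexToSq, mem_image]
  refine ⟨?_, fun h => ⟨_, h, rfl⟩⟩
  rintro ⟨⟨x', y'⟩, h, he⟩
  simp only [sqToHex_mk, Prod.mk.injEq] at he
  obtain ⟨rfl, he⟩ := he
  obtain rfl | ⟨rfl, h'⟩ | ⟨rfl, h'⟩ :
      y = y' ∨ y = y' + 1 ∧ (y' - x') % 2 = 0 ∨ y = y' - 1 ∧ (y' - x') % 2 ≠ 0 := by omega
  exacts [h, (hT _ _ h).1 h', (hT _ _ h).2 h']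

lemma IsParityPoly.exists_offset {T : Finset (ℤ × ℤ)} (hT : IsParityPoly T) :
    ∃ c : ℤ, ∀ x y, (x, y) ∈ T →
      ((y - x - c) % 2 = 0 → (x, y + 1) ∈ T) ∧ ((y - x - c) % 2 ≠ 0 → (x, y - 1) ∈ T) := by
  obtain ⟨⟨⟨p, hp⟩, hconn⟩, ε, hpar, hadj⟩ := hT
  -- `ε` flips parity exactly when the column index does, so `ε x - x` is constant mod 2
  have hconst : ∀ q, ReflTransGen (fun p q => p ∈ T ∧ q ∈ T ∧ SqAdj p q) p q →
      (ε q.1 - q.1 - (ε p.1 - p.1)) % 2 = 0 := by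
    intro q hpq
    induction hpq with
    | refl => simp
    | @tail s t _ hst ih =>
      obtain ⟨hs, ht, hst⟩ := hst
      obtain ⟨x, y⟩ := s
      obtain ⟨x', y'⟩ := t
      rw [sqAdj_mk_iff] at hst
      rcases hst with ⟨hx, -⟩ | ⟨hx, -⟩ | ⟨rfl, -⟩ | ⟨rfl, -⟩
      · obtain rfl : x' = x + 1 := by omega
        have := hadj x ⟨y, hs⟩ ⟨y', ht⟩
        simp only at ih ⊢
        omega
      · obtain rfl : x = x' + 1 := by omega
        have := hadj x' ⟨y', ht⟩ ⟨y, hs⟩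
        simp only at ih ⊢
        omega
      · exact ih
      · exact ih
  refine ⟨ε p.1 - p.1, fun x y hxy => ?_⟩
  have := hconst _ (hconn p hp _ hxy)
  simp only at this
  exact ⟨fun h => (hpar x y hxy).1 (by omega), fun h => (hpar x y hxy).2 (by omega)⟩

lemma IsParityPoly.exists_translateSet_eq_hexToSq {T : Finset (ℤ × ℤ)} (hT : IsParityPoly T) :
    ∃ v S, translateSet v T = hexToSq S := by
  obtain ⟨c, hc⟩ := hT.exists_offset
  refine ⟨(0, -c), _, (hexToSq_image_sqToHex fun x y hxy => ?_).symm⟩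
  simp only [mem_translateSet, Prod.mk_sub_mk, sub_zero, sub_neg_eq_add] at hxy ⊢
  have := hc _ _ hxy
  exact ⟨fun h => by convert this.1 (by omega) using 2; ring,
    fun h => by convert this.2 (by omega) using 2; ring⟩

/-- The doubling map `hexToSq`, sending each hexagonal cell to the pair of square cells
whose diagonally opposite corners lie in that hexagon, defines a bijection (up to
translation) between hexagonal lattice animals with `n` cells and parity polyominoes
with `2n` square cells. -/
theorem hexToSq_bijection (n : ℕ) :
    (∀ S : Finset (ℤ × ℤ), IsHexAnimal n S →
        IsParityPoly (hexToSq S) ∧ (hexToSq S).card = 2 * n) ∧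
    (∀ S T : Finset (ℤ × ℤ), IsHexAnimal n S → IsHexAnimal n T →
        TransEquiv (hexToSq S) (hexToSq T) → TransEquiv S T) ∧
    (∀ T : Finset (ℤ × ℤ), IsParityPoly T → T.card = 2 * n →
        ∃ S : Finset (ℤ × ℤ), IsHexAnimal n S ∧ TransEquiv (hexToSq S) T) := by
  refine ⟨fun S hS => ?_, fun S T _ _ h => transEquiv_of_transEquiv_hexToSq h,
    fun T hT hcard => ?_⟩
  · obtain ⟨hpoly, hcard⟩ := isHexAnimal_iff.1 hS
    exact ⟨isParityPoly_hexToSq hpoly, hcard⟩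
  · obtain ⟨v, S, hS⟩ := hT.exists_translateSet_eq_hexToSq
    refine ⟨S, isHexAnimal_iff.2 ⟨hS ▸ hT.1.translateSet v, ?_⟩, -v, ?_⟩
    · rw [← hS, card_translateSet, hcard]
    · rw [← hS, translateSet_translateSet, add_neg_cancel, translateSet_zero]
end

section
/- The sequence a_n counting hexanimals embeddable in a strip of height 4 satisfies the linear recurrence a_n = 2a_{n-1} - a_{n-3} for n \u2265 4, with a_1 = 1, a_2 = 3, a_3 = 6. -/
/-- A hexagonal animal fits (after translation) in the square-lattice strip `0 ≤ y < k`,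
via the domino embedding. -/
def FitsStrip (k : ℕ) (S : Finset (ℤ × ℤ)) : Prop :=
  ∃ v : ℤ × ℤ, ∀ p ∈ hexToSq (translateSet v S), 0 ≤ p.2 ∧ p.2 < (k : ℤ)

/-- The number of hexagonal lattice animals with `n` cells, up to translation, that are
embeddable in a square-lattice strip of height `k`. -/
noncomputable def stripCount (k n : ℕ) : ℕ :=
  Nat.card (Quot (fun S T : {S : Finset (ℤ × ℤ) // IsHexAnimal n S ∧ FitsStrip k S} =>
    TransEquiv S.1 T.1))

/-!
Write `level p = p.1 + 2 * p.2` for the height of the domino of a cell `p`. A set fits in the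
strip of height `4` iff its levels take at most three consecutive values, and since
`level p ≡ p.1 [ZMOD 2]`, two of its cells in adjacent columns are then always neighbours: the
animals are the sets whose occupied columns form an interval. Up to translation such a set has
columns `0, …, k - 1` and either levels in `[0, 2]` (a band) or levels in `[1, 3]` using both `1`
and `3`. The latter are the cell `(0, 1)` followed by a band using levels `0` and `2`, that is, by
any band except the two zigzags. Removing the last column of a band shows that the numbers `b n`
of bands of `n` cells satisfy `b (n + 2) = b (n + 1) + b n`. Hence `a (n + 1) + 2 = b (n + 1) + b n`
satisfies the same recurrence, which gives the claim as `x³ - 2x² + 1 = (x - 1) (x² - x - 1)`.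
-/

open Finset

noncomputable section

namespace HexStrip

/-- The square-lattice height of the lower half of the domino that `hexToSq` assigns to a cell. -/
def level (p : ℤ × ℤ) : ℤ := p.1 + 2 * p.2

lemma level_add (p v : ℤ × ℤ) : level (p + v) = level p + level v := by
  simp only [level, Prod.fst_add, Prod.snd_add]; ring

lemma level_sub (p v : ℤ × ℤ) : level (p - v) = level p - level v := by
  simp only [level, Prod.fst_sub, Prod.snd_sub]; ring

lemma level_emod_two (p : ℤ × ℤ) : level p % 2 = p.1 % 2 := by
  simp only [level]; omega

lemma eq_of_fst_eq_of_level_eq {p q : ℤ × ℤ} (h₁ : p.1 = q.1) (h₂ : level p = level q) :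
    p = q :=
  Prod.ext h₁ (by simp only [level] at h₂; omega)

/-- The cell of column `x` at level `t`; this needs `t ≡ x [ZMOD 2]`, otherwise the division
rounds and the level is `t - 1`. -/
def cellAt (x t : ℤ) : ℤ × ℤ := (x, (t - x) / 2)

@[simp] lemma cellAt_fst (x t : ℤ) : (cellAt x t).1 = x := rfl

lemma level_cellAt {x t : ℤ} (h : t % 2 = x % 2) : level (cellAt x t) = t := by
  simp only [level, cellAt]; omega

lemma cellAt_fst_level (p : ℤ × ℤ) : cellAt p.1 (level p) = p :=
  eq_of_fst_eq_of_level_eq rfl (level_cellAt (level_emod_two p))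

lemma hexAdj_iff {a b : ℤ × ℤ} : HexAdj a b ↔
    (b.1 = a.1 ∧ (level b = level a + 2 ∨ level b = level a - 2)) ∨
      ((b.1 = a.1 + 1 ∨ b.1 = a.1 - 1) ∧ (level b = level a + 1 ∨ level b = level a - 1)) := by
  simp only [HexAdj, Set.mem_insert_iff, Set.mem_singleton_iff, Prod.ext_iff, Prod.fst_sub,
    Prod.snd_sub, level]
  omega

lemma hexAdj_symm {a b : ℤ × ℤ} (h : HexAdj a b) : HexAdj b a := by
  rw [hexAdj_iff] at h ⊢; omega

lemma mem_translateSet {v p : ℤ × ℤ} {S : Finset (ℤ × ℤ)} :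
    p ∈ translateSet v S ↔ p - v ∈ S := by
  simp only [translateSet, mem_image]
  exact ⟨fun ⟨q, hq, hqp⟩ => hqp ▸ (add_sub_cancel_right q v).symm ▸ hq,
    fun h => ⟨p - v, h, sub_add_cancel p v⟩⟩

lemma add_mem_translateSet {v p : ℤ × ℤ} {S : Finset (ℤ × ℤ)} :
    p + v ∈ translateSet v S ↔ p ∈ S := by
  rw [mem_translateSet, add_sub_cancel_right]

lemma card_translateSet (v : ℤ × ℤ) (S : Finset (ℤ × ℤ)) :
    (translateSet v S).card = S.card :=
  card_image_of_injective _ (add_left_injective v)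

lemma translateSet_zero (S : Finset (ℤ × ℤ)) : translateSet 0 S = S := by
  simp [translateSet]

lemma translateSet_translateSet (v w : ℤ × ℤ) (S : Finset (ℤ × ℤ)) :
    translateSet w (translateSet v S) = translateSet (v + w) S := by
  simp only [translateSet, image_image, Function.comp_def, add_assoc]

lemma _root_.TransEquiv.symm {S T : Finset (ℤ × ℤ)} (h : TransEquiv S T) : TransEquiv T S := by
  obtain ⟨v, rfl⟩ := h
  exact ⟨-v, by rw [translateSet_translateSet, add_neg_cancel, translateSet_zero]⟩

lemma _root_.TransEquiv.trans {S T U : Finset (ℤ × ℤ)} (h : TransEquiv S T) (h' : TransEquiv T U) :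
    TransEquiv S U := by
  obtain ⟨v, rfl⟩ := h
  obtain ⟨w, rfl⟩ := h'
  exact ⟨v + w, (translateSet_translateSet v w S).symm⟩

lemma mem_hexToSq {S : Finset (ℤ × ℤ)} {z : ℤ × ℤ} :
    z ∈ hexToSq S ↔ ∃ q ∈ S, z = (q.1, level q) ∨ z = (q.1, level q + 1) := by
  simp only [hexToSq, mem_biUnion, mem_insert, mem_singleton, level]

lemma fitsStrip_iff {k : ℕ} {S : Finset (ℤ × ℤ)} :
    FitsStrip k S ↔ ∃ c : ℤ, ∀ p ∈ S, 0 ≤ level p + c ∧ level p + c + 2 ≤ k := by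
  constructor
  · rintro ⟨v, hv⟩
    refine ⟨level v, fun p hp => ?_⟩
    have hpv := (add_mem_translateSet (v := v)).2 hp
    have h₀ := hv _ (mem_hexToSq.2 ⟨_, hpv, Or.inl rfl⟩)
    have h₁ := hv _ (mem_hexToSq.2 ⟨_, hpv, Or.inr rfl⟩)
    simp only [level_add] at h₀ h₁
    omega
  · rintro ⟨c, hc⟩
    refine ⟨(c, 0), fun z hz => ?_⟩
    obtain ⟨q, hq, hzq⟩ := mem_hexToSq.1 hz
    have hlevel : level q = level (q - (c, 0)) + c := by
      simp only [level, Prod.fst_sub, Prod.snd_sub]; ring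
    have := hc _ (mem_translateSet.1 hq)
    rcases hzq with rfl | rfl <;> dsimp only <;> omega

def width (S : Finset (ℤ × ℤ)) : ℕ := (S.image Prod.fst).card

def ColumnsFromZero (S : Finset (ℤ × ℤ)) : Prop := S.image Prod.fst = Ico 0 (width S : ℤ)

instance : DecidablePred ColumnsFromZero := fun S => by unfold ColumnsFromZero; infer_instance

lemma ColumnsFromZero.of_image_eq {S : Finset (ℤ × ℤ)} {k : ℕ}
    (h : S.image Prod.fst = Ico 0 (k : ℤ)) : ColumnsFromZero S := by
  rw [ColumnsFromZero, width, h, Int.card_Ico, sub_zero, Int.toNat_natCast]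

namespace ColumnsFromZero

variable {S : Finset (ℤ × ℤ)} (hS : ColumnsFromZero S)
include hS

lemma fst_mem {p : ℤ × ℤ} (hp : p ∈ S) : 0 ≤ p.1 ∧ p.1 < width S := by
  have := mem_image_of_mem Prod.fst hp
  rwa [hS, mem_Ico] at this

lemma exists_mem_fst_eq {x : ℤ} (h₀ : 0 ≤ x) (hx : x < width S) : ∃ q ∈ S, q.1 = x :=
  mem_image.1 (hS ▸ mem_Ico.2 ⟨h₀, hx⟩)

end ColumnsFromZero

lemma columnsFromZero_iff {S : Finset (ℤ × ℤ)} : ColumnsFromZero S ↔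
    (∀ p ∈ S, 0 ≤ p.1) ∧ ∀ p ∈ S, ∀ x, 0 ≤ x → x ≤ p.1 → ∃ q ∈ S, q.1 = x := by
  refine ⟨fun h => ⟨fun p hp => (h.fst_mem hp).1, fun p hp x h₀ hx =>
    h.exists_mem_fst_eq h₀ (hx.trans_lt (h.fst_mem hp).2)⟩, fun ⟨h₀, hdown⟩ => ?_⟩
  have hIcc : ∀ p ∈ S, Icc 0 p.1 ⊆ S.image Prod.fst := fun p hp x hx => by
    obtain ⟨q, hq, rfl⟩ := hdown p hp x (mem_Icc.1 hx).1 (mem_Icc.1 hx).2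
    exact mem_image_of_mem _ hq
  have hlt : ∀ p ∈ S, p.1 < width S := fun p hp => by
    have := card_le_card (hIcc p hp)
    rw [Int.card_Icc] at this
    rw [width]; have := h₀ p hp; omega
  refine eq_of_subset_of_card_le (fun x hx => ?_) (by rw [Int.card_Ico, width]; omega)
  obtain ⟨p, hp, rfl⟩ := mem_image.1 hx
  exact mem_Ico.2 ⟨h₀ p hp, hlt p hp⟩

lemma Icc_subset_image_fst_of_reflTransGen {S : Finset (ℤ × ℤ)} {a b : ℤ × ℤ}
    (h : Relation.ReflTransGen (fun p q => p ∈ S ∧ q ∈ S ∧ HexAdj p q) a b) (ha : a ∈ S) :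
    Icc a.1 b.1 ⊆ S.image Prod.fst := by
  induction h with
  | refl => intro x hx; rw [mem_Icc] at hx; exact mem_image.2 ⟨a, ha, by omega⟩
  | @tail c d _ hcd ih =>
    obtain ⟨-, hd, hadj⟩ := hcd
    rw [hexAdj_iff] at hadj
    intro x hx
    rw [mem_Icc] at hx
    by_cases hxc : x ≤ c.1
    · exact ih (mem_Icc.2 ⟨hx.1, hxc⟩)
    · exact mem_image.2 ⟨d, hd, by omega⟩

lemma reflTransGen_of_columnsFromZero {S : Finset (ℤ × ℤ)} (hS : ColumnsFromZero S)
    (hspan : ∀ p ∈ S, ∀ q ∈ S, level p - level q ≤ 2) {a b : ℤ × ℤ} (ha : a ∈ S) (hb : b ∈ S) :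
    Relation.ReflTransGen (fun p q => p ∈ S ∧ q ∈ S ∧ HexAdj p q) a b := by
  wlog hab : a.1 ≤ b.1 generalizing a b with H
  · have : Std.Symm (fun p q => p ∈ S ∧ q ∈ S ∧ HexAdj p q) :=
      ⟨fun _ _ ⟨hp, hq, h⟩ => ⟨hq, hp, hexAdj_symm h⟩⟩
    exact Std.Symm.symm _ _ (H hb ha (by omega))
  obtain ⟨k, hk⟩ : ∃ k : ℕ, b.1 = a.1 + k := ⟨(b.1 - a.1).toNat, by omega⟩
  induction k generalizing a with
  | zero =>
    have h₁ := hspan a ha b hb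
    have h₂ := hspan b hb a ha
    have hpar : (level b - level a) % 2 = 0 := by
      have := level_emod_two a; have := level_emod_two b; omega
    by_cases hlev : level a = level b
    · exact eq_of_fst_eq_of_level_eq (by omega) hlev ▸ .refl
    · exact .single ⟨ha, hb, hexAdj_iff.2 (Or.inl ⟨by omega, by omega⟩)⟩
  | succ k ih =>
    obtain ⟨c, hc, hc₁⟩ := hS.exists_mem_fst_eq (x := a.1 + 1) (by linarith [(hS.fst_mem ha).1])
      (by have := (hS.fst_mem hb).2; omega)
    have h₁ := hspan a ha c hc
    have h₂ := hspan c hc a ha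
    have hpar : (level c - level a) % 2 = 1 := by
      have := level_emod_two a; have := level_emod_two c; omega
    exact .head ⟨ha, hc, hexAdj_iff.2 (Or.inr ⟨Or.inl hc₁, by omega⟩)⟩
      (ih hc (by omega) (by omega))

/-- The normal form of a translation class: the leftmost column is column `0` and the lowest
level is `0` or `1` (vertical translations shift levels by even amounts). -/
structure IsCanonical (S : Finset (ℤ × ℤ)) : Prop where
  columnsFromZero : ColumnsFromZero S
  level_nonneg : ∀ p ∈ S, 0 ≤ level p
  level_sub_le_two : ∀ p ∈ S, ∀ q ∈ S, level p - level q ≤ 2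
  exists_level_le_one : ∃ p ∈ S, level p ≤ 1

instance : DecidablePred IsCanonical := fun S =>
  decidable_of_iff (ColumnsFromZero S ∧ (∀ p ∈ S, 0 ≤ level p) ∧
      (∀ p ∈ S, ∀ q ∈ S, level p - level q ≤ 2) ∧ ∃ p ∈ S, level p ≤ 1)
    ⟨fun ⟨h₁, h₂, h₃, h₄⟩ => ⟨h₁, h₂, h₃, h₄⟩, fun ⟨h₁, h₂, h₃, h₄⟩ => ⟨h₁, h₂, h₃, h₄⟩⟩

lemma exists_isCanonical_transEquiv {n : ℕ} {S : Finset (ℤ × ℤ)} (hA : IsHexAnimal n S)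
    (hF : FitsStrip 4 S) : ∃ T, IsCanonical T ∧ TransEquiv S T := by
  obtain ⟨-, hne, hconn⟩ := hA
  obtain ⟨c, hc⟩ := fitsStrip_iff.1 hF
  obtain ⟨a, ha, hamin⟩ := S.exists_min_image Prod.fst hne
  obtain ⟨m, hm, hmmin⟩ := S.exists_min_image level hne
  set v : ℤ × ℤ := (-a.1, -((level m - a.1) / 2)) with hv
  have hlv : 0 ≤ level m + level v ∧ level m + level v ≤ 1 := by
    simp only [hv, level]; omega
  have hlevel : ∀ p ∈ translateSet v S, level p = level (p - v) + level v := fun p _ => by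
    rw [level_sub]; ring
  refine ⟨translateSet v S, ⟨columnsFromZero_iff.2 ⟨fun p hp => ?_, fun p hp x hx₀ hxp => ?_⟩,
    fun p hp => ?_, fun p hp q hq => ?_, ?_⟩, v, rfl⟩
  · have := hamin _ (mem_translateSet.1 hp)
    simp only [hv, Prod.fst_sub] at this ⊢
    omega
  · have hpS := mem_translateSet.1 hp
    have hx : x - v.1 ∈ Icc a.1 (p - v).1 := by
      simp only [hv, Prod.fst_sub, mem_Icc] at hxp ⊢; omega
    obtain ⟨q, hq, hqx⟩ :=
      mem_image.1 (Icc_subset_image_fst_of_reflTransGen (hconn a ha _ hpS) ha hx)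
    exact ⟨q + v, add_mem_translateSet.2 hq, by rw [Prod.fst_add, hqx, sub_add_cancel]⟩
  · rw [hlevel p hp]
    have := hmmin _ (mem_translateSet.1 hp)
    omega
  · rw [hlevel p hp, hlevel q hq]
    have := hc _ (mem_translateSet.1 hp)
    have := hc _ (mem_translateSet.1 hq)
    omega
  · exact ⟨m + v, add_mem_translateSet.2 hm, by rw [level_add]; omega⟩

namespace IsCanonical

variable {S T : Finset (ℤ × ℤ)}

lemma nonempty (hS : IsCanonical S) : S.Nonempty :=
  let ⟨p, hp, _⟩ := hS.exists_level_le_one; ⟨p, hp⟩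

lemma shift_bounds {v : ℤ × ℤ} (hS : IsCanonical S) (hT : IsCanonical T)
    (h : translateSet v S = T) : 0 ≤ v.1 ∧ -1 ≤ level v := by
  obtain ⟨q, hq, hq₁⟩ := hS.exists_level_le_one
  obtain ⟨p, hp, hp₀⟩ := hS.columnsFromZero.exists_mem_fst_eq le_rfl
    (by have := hS.columnsFromZero.fst_mem hq; omega)
  have hpT := h ▸ (add_mem_translateSet (v := v)).2 hp
  have hqT := h ▸ (add_mem_translateSet (v := v)).2 hq
  have h₁ := (hT.columnsFromZero.fst_mem hpT).1
  have h₂ := hT.level_nonneg _ hqT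
  rw [Prod.fst_add] at h₁
  rw [level_add] at h₂
  omega

lemma eq_of_transEquiv (hS : IsCanonical S) (hT : IsCanonical T) (h : TransEquiv S T) :
    S = T := by
  obtain ⟨v, rfl⟩ := h
  have h₁ := hS.shift_bounds hT rfl
  have h₂ := hT.shift_bounds hS
    (by rw [translateSet_translateSet, add_neg_cancel, translateSet_zero])
  have hv : v = 0 := by
    simp only [level, Prod.fst_neg, Prod.snd_neg] at h₁ h₂
    exact Prod.ext (by simp only [Prod.fst_zero]; omega) (by simp only [Prod.snd_zero]; omega)
  rw [hv, translateSet_zero]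

lemma isHexAnimal (hS : IsCanonical S) : IsHexAnimal S.card S :=
  ⟨rfl, hS.nonempty, fun _ ha _ hb =>
    reflTransGen_of_columnsFromZero hS.columnsFromZero hS.level_sub_le_two ha hb⟩

lemma fitsStrip_four (hS : IsCanonical S) : FitsStrip 4 S := by
  obtain ⟨m, hm, hmmin⟩ := S.exists_min_image level hS.nonempty
  exact fitsStrip_iff.2 ⟨-level m, fun p hp => by
    have := hmmin p hp; have := hS.level_sub_le_two p hp m hm; push_cast; omega⟩

lemma level_le_three (hS : IsCanonical S) {p : ℤ × ℤ} (hp : p ∈ S) : level p ≤ 3 := by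
  obtain ⟨q, hq, hq₁⟩ := hS.exists_level_le_one
  have := hS.level_sub_le_two p hp q hq
  omega

end IsCanonical

/-- A box containing every set counted below (see `subset_grid`), so that the families
are finsets. -/
def grid (n : ℕ) : Finset (ℤ × ℤ) := Ico 0 (n : ℤ) ×ˢ Icc (-(n : ℤ)) 1

lemma subset_grid {S : Finset (ℤ × ℤ)} (hS : ColumnsFromZero S)
    (hl : ∀ p ∈ S, 0 ≤ level p ∧ level p ≤ 3) : S ⊆ grid S.card := by
  intro p hp
  have hx := hS.fst_mem hp
  have hw : width S ≤ S.card := card_image_le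
  have := hl p hp
  simp only [grid, mem_product, mem_Ico, mem_Icc, level] at this ⊢
  omega

def setsOfCard (P : Finset (ℤ × ℤ) → Prop) [DecidablePred P] (n : ℕ) :
    Finset (Finset (ℤ × ℤ)) :=
  (grid n).powerset.filter fun S => S.card = n ∧ P S

lemma mem_setsOfCard {P : Finset (ℤ × ℤ) → Prop} [DecidablePred P]
    (hP : ∀ S, P S → S ⊆ grid S.card) {n : ℕ} {S : Finset (ℤ × ℤ)} :
    S ∈ setsOfCard P n ↔ S.card = n ∧ P S := by
  rw [setsOfCard, mem_filter, mem_powerset]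
  exact ⟨And.right, fun h => ⟨h.1 ▸ hP S h.2, h⟩⟩

def canonicals (n : ℕ) : Finset (Finset (ℤ × ℤ)) := setsOfCard IsCanonical n

lemma mem_canonicals {n : ℕ} {S : Finset (ℤ × ℤ)} :
    S ∈ canonicals n ↔ S.card = n ∧ IsCanonical S :=
  mem_setsOfCard fun _ hS => subset_grid hS.columnsFromZero fun _ hp =>
    ⟨hS.level_nonneg _ hp, hS.level_le_three hp⟩

lemma _root_.Nat.card_quot_eq_card_range {α β : Type*} {r : α → α → Prop} (f : α → β)
    (hf : ∀ a b, r a b ↔ f a = f b) : Nat.card (Quot r) = Nat.card (Set.range f) := by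
  obtain rfl : r = fun a b => f a = f b := funext₂ fun a b => propext (hf a b)
  exact Nat.card_congr (Setoid.quotientKerEquivRange f)

lemma stripCount_four_eq_card (n : ℕ) : stripCount 4 n = (canonicals n).card := by
  let canon : {S : Finset (ℤ × ℤ) // IsHexAnimal n S ∧ FitsStrip 4 S} → Finset (ℤ × ℤ) :=
    fun S => (exists_isCanonical_transEquiv S.2.1 S.2.2).choose
  have hcanon : ∀ S, IsCanonical (canon S) ∧ TransEquiv S.1 (canon S) :=
    fun S => (exists_isCanonical_transEquiv S.2.1 S.2.2).choose_spec
  have hrange : Set.range canon = ↑(canonicals n) := by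
    ext T
    rw [Set.mem_range, mem_coe, mem_canonicals]
    constructor
    · rintro ⟨S, rfl⟩
      obtain ⟨v, hv⟩ := (hcanon S).2
      exact ⟨hv ▸ (card_translateSet v S.1).trans S.2.1.1, (hcanon S).1⟩
    · rintro ⟨rfl, hT⟩
      let S : {S : Finset (ℤ × ℤ) // IsHexAnimal T.card S ∧ FitsStrip 4 S} :=
        ⟨T, hT.isHexAnimal, hT.fitsStrip_four⟩
      exact ⟨S, (hcanon S).1.eq_of_transEquiv hT (hcanon S).2.symm⟩
  rw [stripCount, Nat.card_quot_eq_card_range canon, hrange]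
  · exact Nat.card_eq_finsetCard _
  intro S T
  exact ⟨fun h => (hcanon S).1.eq_of_transEquiv (hcanon T).1
      (((hcanon S).2.symm.trans h).trans (hcanon T).2),
    fun h => (hcanon S).2.trans (h ▸ (hcanon T).2.symm)⟩

structure IsBand (S : Finset (ℤ × ℤ)) : Prop where
  columnsFromZero : ColumnsFromZero S
  level_nonneg : ∀ p ∈ S, 0 ≤ level p
  level_le_two : ∀ p ∈ S, level p ≤ 2

instance : DecidablePred IsBand := fun S =>
  decidable_of_iff (ColumnsFromZero S ∧ (∀ p ∈ S, 0 ≤ level p) ∧ ∀ p ∈ S, level p ≤ 2)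
    ⟨fun ⟨h₁, h₂, h₃⟩ => ⟨h₁, h₂, h₃⟩, fun ⟨h₁, h₂, h₃⟩ => ⟨h₁, h₂, h₃⟩⟩

def bands (n : ℕ) : Finset (Finset (ℤ × ℤ)) := setsOfCard IsBand n

lemma mem_bands {n : ℕ} {S : Finset (ℤ × ℤ)} :
    S ∈ bands n ↔ S.card = n ∧ IsBand S :=
  mem_setsOfCard fun _ hS => subset_grid hS.columnsFromZero fun _ hp =>
    ⟨hS.level_nonneg _ hp, (hS.level_le_two _ hp).trans (by norm_num)⟩

def topLevels (S : Finset (ℤ × ℤ)) : Finset ℤ :=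
  (S.filter fun p => p.1 + 1 = (width S : ℤ)).image level

def addColumn (S : Finset (ℤ × ℤ)) (D : Finset ℤ) : Finset (ℤ × ℤ) :=
  S ∪ D.image (cellAt (width S))

def dropColumn (S : Finset (ℤ × ℤ)) : Finset (ℤ × ℤ) :=
  S.filter fun p => p.1 + 1 < (width S : ℤ)

section addColumn

variable {S : Finset (ℤ × ℤ)} {D : Finset ℤ} (hS : ColumnsFromZero S)
  (hD : ∀ t ∈ D, t % 2 = (width S : ℤ) % 2)
include hD

lemma mem_addColumn {p : ℤ × ℤ} :
    p ∈ addColumn S D ↔ p ∈ S ∨ (p.1 = width S ∧ level p ∈ D) := by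
  rw [addColumn, mem_union, mem_image]
  refine or_congr_right ⟨fun ⟨t, ht, htp⟩ => ?_, fun ⟨hp₁, hp₂⟩ => ⟨_, hp₂, ?_⟩⟩
  · rw [← htp, level_cellAt (hD t ht)]
    exact ⟨rfl, ht⟩
  · rw [← hp₁, cellAt_fst_level]

include hS

lemma card_addColumn : (addColumn S D).card = S.card + D.card := by
  rw [addColumn, card_union_of_disjoint, card_image_of_injOn]
  · intro s hs t ht hst
    rw [← level_cellAt (hD s hs), ← level_cellAt (hD t ht), hst]
  · refine disjoint_left.2 fun p hpS hpD => ?_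
    obtain ⟨t, -, rfl⟩ := mem_image.1 hpD
    exact (hS.fst_mem hpS).2.ne (cellAt_fst _ _)

lemma image_fst_addColumn (hne : D.Nonempty) :
    (addColumn S D).image Prod.fst = Ico 0 ((width S + 1 : ℕ) : ℤ) := by
  ext x
  simp only [mem_image, mem_Ico, mem_addColumn hD]
  constructor
  · rintro ⟨p, hp | ⟨hp, -⟩, rfl⟩
    · have := hS.fst_mem hp; omega
    · omega
  · intro hx
    rcases (show x < width S ∨ x = width S by omega) with hx' | rfl
    · obtain ⟨q, hq, rfl⟩ := hS.exists_mem_fst_eq hx.1 hx'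
      exact ⟨q, Or.inl hq, rfl⟩
    · obtain ⟨t, ht⟩ := hne
      refine ⟨cellAt (width S) t, Or.inr ⟨rfl, ?_⟩, rfl⟩
      rwa [level_cellAt (hD t ht)]

lemma width_addColumn (hne : D.Nonempty) : width (addColumn S D) = width S + 1 := by
  rw [width, image_fst_addColumn hS hD hne, Int.card_Ico, sub_zero, Int.toNat_natCast]

lemma columnsFromZero_addColumn (hne : D.Nonempty) : ColumnsFromZero (addColumn S D) :=
  .of_image_eq (image_fst_addColumn hS hD hne)

lemma dropColumn_addColumn (hne : D.Nonempty) : dropColumn (addColumn S D) = S := by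
  ext p
  rw [dropColumn, mem_filter, mem_addColumn hD, width_addColumn hS hD hne]
  constructor
  · rintro ⟨hp | ⟨hp, -⟩, hlt⟩
    · exact hp
    · push_cast at hlt; omega
  · intro hp
    have := hS.fst_mem hp
    exact ⟨Or.inl hp, by push_cast; omega⟩

lemma topLevels_addColumn (hne : D.Nonempty) : topLevels (addColumn S D) = D := by
  ext t
  simp only [topLevels, mem_image, mem_filter, mem_addColumn hD, width_addColumn hS hD hne]
  constructor
  · rintro ⟨p, ⟨hp | ⟨-, hpD⟩, hpw⟩, rfl⟩
    · have := hS.fst_mem hp; push_cast at hpw; omega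
    · exact hpD
  · intro ht
    refine ⟨cellAt (width S) t, ⟨Or.inr ⟨rfl, ?_⟩, by push_cast; rfl⟩, level_cellAt (hD t ht)⟩
    rwa [level_cellAt (hD t ht)]

end addColumn

lemma IsBand.addColumn {S : Finset (ℤ × ℤ)} {D : Finset ℤ} (hS : IsBand S) (hne : D.Nonempty)
    (hD : ∀ t ∈ D, 0 ≤ t ∧ t ≤ 2 ∧ t % 2 = (width S : ℤ) % 2) : IsBand (addColumn S D) := by
  have hpar : ∀ t ∈ D, t % 2 = (width S : ℤ) % 2 := fun t ht => (hD t ht).2.2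
  refine ⟨columnsFromZero_addColumn hS.columnsFromZero hpar hne, fun p hp => ?_, fun p hp => ?_⟩ <;>
  rcases (mem_addColumn hpar).1 hp with hp | ⟨-, hp⟩
  · exact hS.level_nonneg p hp
  · exact (hD _ hp).1
  · exact hS.level_le_two p hp
  · exact (hD _ hp).2.1

lemma mem_topLevels {S : Finset (ℤ × ℤ)} {t : ℤ} :
    t ∈ topLevels S ↔ ∃ p ∈ S, p.1 + 1 = width S ∧ level p = t := by
  simp only [topLevels, mem_image, mem_filter, and_assoc]

section dropColumn

variable {S : Finset (ℤ × ℤ)} (hS : ColumnsFromZero S)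
include hS

lemma image_fst_dropColumn : (dropColumn S).image Prod.fst = Ico 0 ((width S - 1 : ℕ) : ℤ) := by
  rw [dropColumn, ← filter_image (p := fun x : ℤ => x + 1 < (width S : ℤ)), hS]
  ext x
  simp only [mem_filter, mem_Ico]
  omega

lemma width_dropColumn : width (dropColumn S) = width S - 1 := by
  rw [width, image_fst_dropColumn hS, Int.card_Ico, sub_zero, Int.toNat_natCast]

lemma topLevels_emod_two {t : ℤ} (ht : t ∈ topLevels S) :
    t % 2 = ((width S - 1 : ℕ) : ℤ) % 2 := by
  obtain ⟨p, hp, hpw, rfl⟩ := mem_topLevels.1 ht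
  have := level_emod_two p
  have := hS.fst_mem hp
  omega

lemma addColumn_dropColumn : addColumn (dropColumn S) (topLevels S) = S := by
  ext p
  rw [mem_addColumn (by rw [width_dropColumn hS]; exact fun t => topLevels_emod_two hS),
    width_dropColumn hS, mem_topLevels, dropColumn, mem_filter]
  constructor
  · rintro (⟨hp, -⟩ | ⟨hp₁, q, hq, hqw, hqp⟩)
    · exact hp
    · have := hS.fst_mem hq
      rw [← eq_of_fst_eq_of_level_eq (by omega) hqp]
      exact hq
  · intro hp
    have := hS.fst_mem hp
    by_cases hlt : p.1 + 1 < width S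
    · exact Or.inl ⟨hp, hlt⟩
    · exact Or.inr ⟨by omega, p, hp, by omega, rfl⟩

lemma columnsFromZero_dropColumn : ColumnsFromZero (dropColumn S) :=
  .of_image_eq (image_fst_dropColumn hS)

lemma card_dropColumn_add : (dropColumn S).card + (topLevels S).card = S.card := by
  conv_rhs => rw [← addColumn_dropColumn hS]
  rw [card_addColumn (columnsFromZero_dropColumn hS)
    (by rw [width_dropColumn hS]; exact fun t => topLevels_emod_two hS)]

end dropColumn

lemma IsBand.dropColumn {S : Finset (ℤ × ℤ)} (hS : IsBand S) : IsBand (dropColumn S) :=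
  ⟨columnsFromZero_dropColumn hS.columnsFromZero,
    fun p hp => hS.level_nonneg p (mem_filter.1 hp).1,
    fun p hp => hS.level_le_two p (mem_filter.1 hp).1⟩

lemma ColumnsFromZero.topLevels_nonempty {S : Finset (ℤ × ℤ)} (hS : ColumnsFromZero S)
    (hw : 0 < width S) : (topLevels S).Nonempty := by
  obtain ⟨q, hq, hq₁⟩ := hS.exists_mem_fst_eq (x := width S - 1) (by omega) (by omega)
  exact ⟨level q, mem_topLevels.2 ⟨q, hq, by omega, rfl⟩⟩

lemma IsBand.topLevels_bounds {S : Finset (ℤ × ℤ)} (hS : IsBand S) {t : ℤ}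
    (ht : t ∈ topLevels S) : 0 ≤ t ∧ t ≤ 2 := by
  obtain ⟨p, hp, -, rfl⟩ := mem_topLevels.1 ht
  exact ⟨hS.level_nonneg p hp, hS.level_le_two p hp⟩

lemma IsBand.topLevels_eq_singleton_one {S : Finset (ℤ × ℤ)} (hS : IsBand S) (hne : S.Nonempty)
    (hw : width S % 2 = 0) : topLevels S = {1} := by
  have hw₀ : 0 < width S := by
    obtain ⟨p, hp⟩ := hne; have := hS.columnsFromZero.fst_mem hp; omega
  refine (subset_singleton_iff.1 fun t ht => ?_).resolve_left
    (hS.columnsFromZero.topLevels_nonempty hw₀).ne_empty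
  have := hS.topLevels_bounds ht
  have := topLevels_emod_two hS.columnsFromZero ht
  rw [mem_singleton]
  omega

lemma IsBand.topLevels_mem {S : Finset (ℤ × ℤ)} (hS : IsBand S) (hw : width S % 2 = 1) :
    topLevels S ∈ ({0, 2} : Finset ℤ).powerset.erase ∅ := by
  refine mem_erase.2 ⟨(hS.columnsFromZero.topLevels_nonempty (by omega)).ne_empty,
    mem_powerset.2 fun t ht => ?_⟩
  have := hS.topLevels_bounds ht
  have := topLevels_emod_two hS.columnsFromZero ht
  simp only [mem_insert, mem_singleton]
  omega

/-- Removing the last column, whose levels form `D`, is a bijection onto the bands of the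
opposite width parity. -/
lemma card_bands_filter_topLevels {m n j : ℕ} {D : Finset ℤ} (hm : m = n + D.card)
    (hne : D.Nonempty) (hD : ∀ t ∈ D, 0 ≤ t ∧ t ≤ 2 ∧ t % 2 = j) :
    ((bands m).filter fun S => width S % 2 = 1 - j ∧ topLevels S = D).card =
      ((bands n).filter fun T => width T % 2 = j).card := by
  obtain ⟨t, ht⟩ := hne
  have htj := (hD t ht).2.2
  have hpar : ∀ T : Finset (ℤ × ℤ), width T % 2 = j → ∀ s ∈ D, s % 2 = (width T : ℤ) % 2 :=
    fun T hT s hs => by have := (hD s hs).2.2; omega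
  refine card_nbij' dropColumn (addColumn · D) (fun S hS => ?_) (fun T hT => ?_)
    (fun S hS => ?_) (fun T hT => ?_)
  · simp only [mem_coe, mem_filter, mem_bands] at hS ⊢
    obtain ⟨⟨hcard, hband⟩, hw, rfl⟩ := hS
    have := card_dropColumn_add hband.columnsFromZero
    have := topLevels_emod_two hband.columnsFromZero ht
    rw [width_dropColumn hband.columnsFromZero]
    exact ⟨⟨by omega, hband.dropColumn⟩, by omega⟩
  · simp only [mem_coe, mem_filter, mem_bands] at hT ⊢
    obtain ⟨⟨hcard, hband⟩, hw⟩ := hT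
    have hcols := hband.columnsFromZero
    rw [card_addColumn hcols (hpar T hw), width_addColumn hcols (hpar T hw) ⟨t, ht⟩,
      topLevels_addColumn hcols (hpar T hw) ⟨t, ht⟩]
    refine ⟨⟨by omega, hband.addColumn ⟨t, ht⟩ fun s hs => ?_⟩, by omega, rfl⟩
    exact ⟨(hD s hs).1, (hD s hs).2.1, hpar T hw s hs⟩
  · simp only [mem_coe, mem_filter, mem_bands] at hS
    obtain ⟨⟨-, hband⟩, -, rfl⟩ := hS
    exact addColumn_dropColumn hband.columnsFromZero
  · simp only [mem_coe, mem_filter, mem_bands] at hT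
    exact dropColumn_addColumn hT.1.2.columnsFromZero (hpar T hT.2) ⟨t, ht⟩

lemma card_bands_eq_even_add_odd (n : ℕ) : (bands n).card =
    ((bands n).filter fun S => width S % 2 = 0).card +
      ((bands n).filter fun S => width S % 2 = 1).card := by
  rw [← card_filter_add_card_filter_not (fun S => width S % 2 = 0)]
  exact congrArg _ (congrArg _ (filter_congr fun S _ => by omega))

lemma card_bands_even_width_succ (n : ℕ) :
    ((bands (n + 1)).filter fun S => width S % 2 = 0).card =
      ((bands n).filter fun T => width T % 2 = 1).card := by
  rw [← card_bands_filter_topLevels (m := n + 1) (j := 1) (D := {1}) (by simp)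
    (singleton_nonempty 1) (by simp)]
  refine congrArg _ (filter_congr fun S hS => ?_)
  obtain ⟨hcard, hband⟩ := mem_bands.1 hS
  have hne : S.Nonempty := card_pos.1 (by omega)
  exact ⟨fun hw => ⟨hw, hband.topLevels_eq_singleton_one hne hw⟩, And.left⟩

lemma card_bands_odd_width_add_two (n : ℕ) :
    ((bands (n + 2)).filter fun S => width S % 2 = 1).card =
      2 * ((bands (n + 1)).filter fun T => width T % 2 = 0).card +
        ((bands n).filter fun T => width T % 2 = 0).card := by
  rw [card_eq_sum_card_fiberwise (f := topLevels) fun S hS =>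
      (mem_bands.1 (mem_filter.1 hS).1).2.topLevels_mem (mem_filter.1 hS).2,
    show ({0, 2} : Finset ℤ).powerset.erase ∅ = {{0}, {2}, {0, 2}} by decide,
    sum_insert (by decide), sum_insert (by decide), sum_singleton]
  simp only [filter_filter]
  rw [card_bands_filter_topLevels (n := n + 1) (j := 0) (by simp) (by simp) (by simp),
    card_bands_filter_topLevels (n := n + 1) (j := 0) (by simp) (by simp) (by simp),
    card_bands_filter_topLevels (n := n) (j := 0) (by simp) (by simp) (by simp)]
  ring

lemma card_bands_add_two (n : ℕ) : (bands (n + 2)).card =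
    (bands (n + 1)).card + (bands n).card := by
  rw [card_bands_eq_even_add_odd, card_bands_eq_even_add_odd (n + 1),
    card_bands_eq_even_add_odd n, card_bands_odd_width_add_two, card_bands_even_width_succ (n + 1),
    card_bands_even_width_succ n]
  ring

lemma eq_of_forall_level_eq {S T : Finset (ℤ × ℤ)} {g : ℤ → ℤ} (hS : ColumnsFromZero S)
    (hT : ColumnsFromZero T) (hgS : ∀ p ∈ S, level p = g p.1) (hgT : ∀ p ∈ T, level p = g p.1)
    (hcard : S.card = T.card) : S = T := by
  have hwidth : ∀ U : Finset (ℤ × ℤ), (∀ p ∈ U, level p = g p.1) → width U = U.card :=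
    fun U hU => card_image_of_injOn fun p hp q hq h =>
      eq_of_fst_eq_of_level_eq h (by rw [hU p hp, hU q hq, h])
  refine eq_of_subset_of_card_le (fun p hp => ?_) hcard.ge
  have hp₁ : p.1 ∈ T.image Prod.fst := by
    rw [hT, hwidth T hgT, ← hcard, ← hwidth S hgS, ← hS]
    exact mem_image_of_mem _ hp
  obtain ⟨q, hq, hqp⟩ := mem_image.1 hp₁
  rwa [← eq_of_fst_eq_of_level_eq hqp (by rw [hgT q hq, hgS p hp, hqp])]

lemma isBand_empty : IsBand ∅ :=
  ⟨.of_image_eq (k := 0) (by simp), by simp, by simp⟩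

section zigzag

variable {e : ℤ} (he : e = 0 ∨ e = 2)
include he

lemma IsBand.level_eq_of_forall_ne {S : Finset (ℤ × ℤ)} (hS : IsBand S)
    (hSe : ∀ p ∈ S, level p ≠ e) {p : ℤ × ℤ} (hp : p ∈ S) :
    level p = if p.1 % 2 = 0 then 2 - e else 1 := by
  have := hS.level_nonneg p hp
  have := hS.level_le_two p hp
  have := hSe p hp
  have := level_emod_two p
  split_ifs <;> omega

lemma exists_isBand_forall_level_ne (k : ℕ) :
    ∃ S : Finset (ℤ × ℤ), S.card = k ∧ IsBand S ∧ ∀ p ∈ S, level p ≠ e := by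
  induction k with
  | zero => exact ⟨∅, rfl, isBand_empty, by simp⟩
  | succ k ih =>
    obtain ⟨S, hcard, hS, hSe⟩ := ih
    set t : ℤ := if (width S : ℤ) % 2 = 0 then 2 - e else 1
    have ht : ∀ s ∈ ({t} : Finset ℤ), 0 ≤ s ∧ s ≤ 2 ∧ s % 2 = (width S : ℤ) % 2 := by
      simp only [mem_singleton, forall_eq, t]; split_ifs <;> omega
    have hpar := fun s hs => (ht s hs).2.2
    refine ⟨addColumn S {t}, by rw [card_addColumn hS.columnsFromZero hpar, hcard, card_singleton],
      hS.addColumn (singleton_nonempty t) ht, fun p hp => ?_⟩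
    rcases (mem_addColumn hpar).1 hp with hp | ⟨-, hp⟩
    · exact hSe p hp
    · rw [mem_singleton.1 hp]; simp only [t]; split_ifs <;> omega

/-- A band avoiding level `e` has a single cell in each column, at the level fixed by the
parity of the column. -/
lemma card_bands_filter_forall_level_ne (k : ℕ) :
    ((bands k).filter fun S => ∀ p ∈ S, level p ≠ e).card = 1 := by
  obtain ⟨S, hcard, hS, hSe⟩ := exists_isBand_forall_level_ne he k
  refine card_eq_one.2 ⟨S, eq_singleton_iff_unique_mem.2
    ⟨mem_filter.2 ⟨mem_bands.2 ⟨hcard, hS⟩, hSe⟩, fun T hT => ?_⟩⟩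
  obtain ⟨⟨hTcard, hT⟩, hTe⟩ := mem_filter.1 hT |>.imp_left mem_bands.1
  exact eq_of_forall_level_eq (g := fun x => if x % 2 = 0 then 2 - e else 1)
    hT.columnsFromZero hS.columnsFromZero (fun _ hp => hT.level_eq_of_forall_ne he hTe hp)
    (fun _ hp => hS.level_eq_of_forall_ne he hSe hp) (hTcard.trans hcard.symm)

end zigzag

lemma card_bands_filter_levels_add_two {k : ℕ} (hk : 1 ≤ k) :
    ((bands k).filter fun S => (∃ p ∈ S, level p = 0) ∧ ∃ p ∈ S, level p = 2).card + 2
      = (bands k).card := by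
  have hdisj : Disjoint ((bands k).filter fun S => ∀ p ∈ S, level p ≠ 0)
      ((bands k).filter fun S => ∀ p ∈ S, level p ≠ 2) := by
    refine disjoint_filter.2 fun S hS h₀ h₂ => ?_
    obtain ⟨hcard, hband⟩ := mem_bands.1 hS
    have hne : S.Nonempty := card_pos.1 (by omega)
    obtain ⟨q, hq, hq₀⟩ := hband.columnsFromZero.exists_mem_fst_eq le_rfl
      (by rw [width]; exact_mod_cast card_pos.2 (hne.image Prod.fst))
    have := level_emod_two q
    have := hband.level_nonneg q hq
    have := hband.level_le_two q hq
    have := h₀ q hq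
    have := h₂ q hq
    omega
  have hcompl : ((bands k).filter
      fun S => ¬((∃ p ∈ S, level p = 0) ∧ ∃ p ∈ S, level p = 2)) =
      ((bands k).filter fun S => ∀ p ∈ S, level p ≠ 0) ∪
        ((bands k).filter fun S => ∀ p ∈ S, level p ≠ 2) := by
    rw [← filter_or]
    exact filter_congr fun S _ => by rw [not_and_or]; simp only [not_exists, not_and, ne_eq]
  have h := card_filter_add_card_filter_not (s := bands k)
    fun S => (∃ p ∈ S, level p = 0) ∧ ∃ p ∈ S, level p = 2
  rw [hcompl, card_union_of_disjoint hdisj, card_bands_filter_forall_level_ne (Or.inl rfl),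
    card_bands_filter_forall_level_ne (Or.inr rfl)] at h
  omega

lemma IsBand.exists_level_le_one {S : Finset (ℤ × ℤ)} (hS : IsBand S) (hcard : 2 ≤ S.card) :
    ∃ p ∈ S, level p ≤ 1 := by
  by_contra! h
  have hsub : S ⊆ {((0 : ℤ), (1 : ℤ))} := fun p hp => by
    have hcol := hS.columnsFromZero.fst_mem hp
    have hp₀ : p.1 = 0 := by
      by_contra hp₀
      obtain ⟨q, hq, hq₁⟩ := hS.columnsFromZero.exists_mem_fst_eq (x := 1) zero_le_one (by omega)
      have := level_emod_two q
      have := h q hq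
      have := hS.level_le_two q hq
      omega
    have := h p hp
    have := hS.level_le_two p hp
    exact mem_singleton.2 (eq_of_fst_eq_of_level_eq hp₀ (by simp only [level] at *; omega))
  have := card_le_card hsub
  simp only [card_singleton] at this
  omega

lemma IsBand.isCanonical {S : Finset (ℤ × ℤ)} (hS : IsBand S) (h : ∃ p ∈ S, level p ≤ 1) :
    IsCanonical S :=
  ⟨hS.columnsFromZero, hS.level_nonneg,
    fun p hp q hq => by have := hS.level_le_two p hp; have := hS.level_nonneg q hq; omega, h⟩

lemma canonicals_filter_level_le_two {n : ℕ} (hn : 2 ≤ n) :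
    (canonicals n).filter (fun S => ∀ p ∈ S, level p ≤ 2) = bands n := by
  ext S
  rw [mem_filter, mem_canonicals, mem_bands]
  constructor
  · rintro ⟨⟨hcard, hS⟩, hle⟩
    exact ⟨hcard, hS.columnsFromZero, hS.level_nonneg, hle⟩
  · rintro ⟨hcard, hS⟩
    exact ⟨⟨hcard, hS.isCanonical (hS.exists_level_le_one (by omega))⟩, hS.level_le_two⟩

def prependCell (T : Finset (ℤ × ℤ)) : Finset (ℤ × ℤ) := insert (0, 1) (translateSet (1, 0) T)

def dropFirstCell (S : Finset (ℤ × ℤ)) : Finset (ℤ × ℤ) := translateSet (-(1, 0)) (S.erase (0, 1))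

lemma mem_prependCell {T : Finset (ℤ × ℤ)} {p : ℤ × ℤ} :
    p ∈ prependCell T ↔ p = (0, 1) ∨ p - (1, 0) ∈ T := by
  rw [prependCell, mem_insert, mem_translateSet]

lemma mem_dropFirstCell {S : Finset (ℤ × ℤ)} {p : ℤ × ℤ} :
    p ∈ dropFirstCell S ↔ p + (1, 0) ≠ (0, 1) ∧ p + (1, 0) ∈ S := by
  rw [dropFirstCell, mem_translateSet, sub_neg_eq_add, mem_erase]

lemma level_add_one_zero (p : ℤ × ℤ) : level (p + (1, 0)) = level p + 1 := by
  rw [level_add]; rfl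

lemma level_sub_one_zero (p : ℤ × ℤ) : level (p - (1, 0)) = level p - 1 := by
  rw [level_sub]; rfl

lemma IsCanonical.one_le_level {S : Finset (ℤ × ℤ)} (hS : IsCanonical S)
    (hhigh : ∃ q ∈ S, 2 < level q) {p : ℤ × ℤ} (hp : p ∈ S) : 1 ≤ level p := by
  obtain ⟨q, hq, hq₃⟩ := hhigh
  have := hS.level_sub_le_two q hq p hp
  omega

lemma IsCanonical.eq_of_fst_eq_zero {S : Finset (ℤ × ℤ)} (hS : IsCanonical S)
    (hhigh : ∃ q ∈ S, 2 < level q) {p : ℤ × ℤ} (hp : p ∈ S) (hp₀ : p.1 = 0) : p = (0, 1) := by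
  have := level_emod_two p
  have := hS.one_le_level hhigh hp
  have := hS.level_le_three hp
  have hp₂ : level p = 2 := by omega
  exact eq_of_fst_eq_of_level_eq hp₀ (by rw [hp₂]; rfl)

lemma IsCanonical.zero_one_mem {S : Finset (ℤ × ℤ)} (hS : IsCanonical S)
    (hhigh : ∃ q ∈ S, 2 < level q) : ((0, 1) : ℤ × ℤ) ∈ S := by
  obtain ⟨q, hq⟩ := hS.nonempty
  obtain ⟨p, hp, hp₀⟩ := hS.columnsFromZero.exists_mem_fst_eq le_rfl
    (by have := hS.columnsFromZero.fst_mem hq; omega)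
  rwa [← hS.eq_of_fst_eq_zero hhigh hp hp₀]

lemma IsCanonical.isBand_dropFirstCell {S : Finset (ℤ × ℤ)} (hS : IsCanonical S)
    (hhigh : ∃ q ∈ S, 2 < level q) :
    IsBand (dropFirstCell S) ∧ (∃ p ∈ dropFirstCell S, level p = 0) ∧
      ∃ p ∈ dropFirstCell S, level p = 2 := by
  have hlev : ∀ p ∈ S, 1 ≤ level p ∧ level p ≤ 3 := fun p hp =>
    ⟨hS.one_le_level hhigh hp, hS.level_le_three hp⟩
  have hcol : ∀ p ∈ S, p ≠ (0, 1) → 1 ≤ p.1 := fun p hp hne => by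
    have := (hS.columnsFromZero.fst_mem hp).1
    by_contra hp₀
    exact hne (hS.eq_of_fst_eq_zero hhigh hp (by omega))
  obtain ⟨q, hq, hq₃⟩ := hhigh
  have hmem : ∀ p ∈ S, p ≠ (0, 1) → p - (1, 0) ∈ dropFirstCell S := fun p hp hne =>
    mem_dropFirstCell.2 (by rw [sub_add_cancel]; exact ⟨hne, hp⟩)
  have hne_of_odd : ∀ p, level p % 2 = 1 → p ≠ (0, 1) := by
    rintro p hp rfl; simp [level] at hp
  refine ⟨⟨columnsFromZero_iff.2 ⟨fun p hp => ?_, fun p hp x hx₀ hxp => ?_⟩, fun p hp => ?_,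
    fun p hp => ?_⟩, ?_, q - (1, 0), hmem q hq (hne_of_odd q (by have := hlev q hq; omega)),
    by rw [level_sub_one_zero]; have := hlev q hq; omega⟩
  · obtain ⟨hne, hpS⟩ := mem_dropFirstCell.1 hp
    have := hcol _ hpS hne
    simp only [Prod.fst_add] at this
    omega
  · obtain ⟨hne, hpS⟩ := mem_dropFirstCell.1 hp
    obtain ⟨r, hr, hr₁⟩ := hS.columnsFromZero.exists_mem_fst_eq (x := x + 1) (by omega)
      (by have := hS.columnsFromZero.fst_mem hpS; simp only [Prod.fst_add] at this; omega)
    exact ⟨r - (1, 0), hmem r hr (fun h => by simp [h] at hr₁; omega), by simp [hr₁]⟩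
  · have := hlev _ (mem_dropFirstCell.1 hp).2
    rw [level_add_one_zero] at this
    omega
  · have := hlev _ (mem_dropFirstCell.1 hp).2
    rw [level_add_one_zero] at this
    omega
  · obtain ⟨u, hu, hu₁⟩ := hS.exists_level_le_one
    have := hlev u hu
    exact ⟨u - (1, 0), hmem u hu (hne_of_odd u (by omega)), by rw [level_sub_one_zero]; omega⟩

lemma IsBand.isCanonical_prependCell {T : Finset (ℤ × ℤ)} (hT : IsBand T)
    (h₀ : ∃ p ∈ T, level p = 0) : IsCanonical (prependCell T) := by
  have hlev : ∀ p ∈ prependCell T, 1 ≤ level p ∧ level p ≤ 3 := fun p hp => by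
    rcases mem_prependCell.1 hp with rfl | hp
    · simp [level]
    · have := hT.level_nonneg _ hp
      have := hT.level_le_two _ hp
      rw [level_sub_one_zero] at *
      omega
  refine ⟨columnsFromZero_iff.2 ⟨fun p hp => ?_, fun p hp x hx₀ hxp => ?_⟩,
    fun p hp => by linarith [hlev p hp], fun p hp q hq => by linarith [hlev p hp, hlev q hq], ?_⟩
  · rcases mem_prependCell.1 hp with rfl | hp
    · exact le_rfl
    · have := (hT.columnsFromZero.fst_mem hp).1
      simp only [Prod.fst_sub] at this
      omega
  · rcases eq_or_lt_of_le hx₀ with rfl | hx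
    · exact ⟨(0, 1), mem_prependCell.2 (Or.inl rfl), rfl⟩
    · have hp' : p - (1, 0) ∈ T :=
        (mem_prependCell.1 hp).resolve_left (by rintro rfl; simp at hxp; omega)
      obtain ⟨r, hr, hr₁⟩ := hT.columnsFromZero.exists_mem_fst_eq (x := x - 1) (by omega)
        (by have := (hT.columnsFromZero.fst_mem hp').2; simp only [Prod.fst_sub] at this; omega)
      exact ⟨r + (1, 0), mem_prependCell.2 (Or.inr (by rwa [add_sub_cancel_right])),
        by simp [hr₁]⟩
  · obtain ⟨p, hp, hp₀⟩ := h₀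
    exact ⟨p + (1, 0), mem_prependCell.2 (Or.inr (by rwa [add_sub_cancel_right])),
      by rw [level_add_one_zero]; omega⟩

lemma zero_one_notMem_translateSet {T : Finset (ℤ × ℤ)} (hT : ∀ p ∈ T, 0 ≤ p.1) :
    ((0, 1) : ℤ × ℤ) ∉ translateSet (1, 0) T := fun h => by
  have := hT _ (mem_translateSet.1 h)
  simp at this

lemma card_prependCell {T : Finset (ℤ × ℤ)} (hT : ∀ p ∈ T, 0 ≤ p.1) :
    (prependCell T).card = T.card + 1 := by
  rw [prependCell, card_insert_of_notMem (zero_one_notMem_translateSet hT), card_translateSet]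

lemma dropFirstCell_prependCell {T : Finset (ℤ × ℤ)} (hT : ∀ p ∈ T, 0 ≤ p.1) :
    dropFirstCell (prependCell T) = T := by
  rw [dropFirstCell, prependCell, erase_insert (zero_one_notMem_translateSet hT),
    translateSet_translateSet, add_neg_cancel, translateSet_zero]

lemma prependCell_dropFirstCell {S : Finset (ℤ × ℤ)} (h : ((0, 1) : ℤ × ℤ) ∈ S) :
    prependCell (dropFirstCell S) = S := by
  rw [dropFirstCell, prependCell, translateSet_translateSet, neg_add_cancel, translateSet_zero,
    insert_erase h]

/-- A canonical set reaching level `3` has all its levels in `[1, 3]`, so its column `0` is the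
single cell `(0, 1)`; removing it and shifting one column to the left leaves a band. -/
lemma card_canonicals_filter_not_level_le_two (n : ℕ) :
    ((canonicals (n + 1)).filter fun S => ¬∀ p ∈ S, level p ≤ 2).card =
      ((bands n).filter
        fun T => (∃ p ∈ T, level p = 0) ∧ ∃ p ∈ T, level p = 2).card := by
  refine card_nbij' dropFirstCell prependCell (fun S hS => ?_) (fun T hT => ?_)
    (fun S hS => ?_) (fun T hT => ?_)
  · simp only [mem_coe, mem_filter, mem_canonicals, mem_bands, not_forall, not_le,
      exists_prop] at hS ⊢
    obtain ⟨⟨hcard, hS⟩, hhigh⟩ := hS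
    obtain ⟨hband, hlevels⟩ := hS.isBand_dropFirstCell hhigh
    have := card_prependCell fun p hp => (hband.columnsFromZero.fst_mem hp).1
    rw [prependCell_dropFirstCell (hS.zero_one_mem hhigh)] at this
    exact ⟨⟨by omega, hband⟩, hlevels⟩
  · simp only [mem_coe, mem_filter, mem_canonicals, mem_bands, not_forall, not_le,
      exists_prop] at hT ⊢
    obtain ⟨⟨hcard, hT⟩, h₀, p, hp, hp₂⟩ := hT
    refine ⟨⟨by rw [card_prependCell fun p hp => (hT.columnsFromZero.fst_mem hp).1, hcard],
      hT.isCanonical_prependCell h₀⟩, p + (1, 0), ?_, by rw [level_add_one_zero]; omega⟩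
    exact mem_prependCell.2 (Or.inr (by rwa [add_sub_cancel_right]))
  · simp only [mem_coe, mem_filter, mem_canonicals, not_forall, not_le, exists_prop] at hS
    exact prependCell_dropFirstCell (hS.1.2.zero_one_mem hS.2)
  · simp only [mem_coe, mem_filter, mem_bands] at hT
    exact dropFirstCell_prependCell fun p hp => (hT.1.2.columnsFromZero.fst_mem hp).1

lemma card_canonicals_add_two (n : ℕ) :
    (canonicals (n + 2)).card + 2 =
      (bands (n + 2)).card + (bands (n + 1)).card := by
  rw [← card_filter_add_card_filter_not (s := canonicals (n + 2))
      fun S => ∀ p ∈ S, level p ≤ 2,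
    canonicals_filter_level_le_two (by omega), card_canonicals_filter_not_level_le_two, add_assoc,
    card_bands_filter_levels_add_two (by omega)]

lemma stripCount_four_succ_add_two (n : ℕ) :
    stripCount 4 (n + 1) + 2 = (bands (n + 1)).card + (bands n).card := by
  rw [stripCount_four_eq_card]
  cases n with
  | zero => decide
  | succ n => exact card_canonicals_add_two n

lemma card_bands_zero : (bands 0).card = 1 := by decide

lemma card_bands_one : (bands 1).card = 2 := by decide

end HexStrip

end

/-- The sequence `a n = stripCount 4 n` counting hexanimals embeddable in a strip of
height 4 satisfies the linear recurrence `a n = 2 a (n-1) - a (n-3)` for `n ≥ 4`, with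
`a 1 = 1`, `a 2 = 3`, `a 3 = 6`. -/
theorem stripCount_four_recurrence :
    stripCount 4 1 = 1 ∧ stripCount 4 2 = 3 ∧ stripCount 4 3 = 6 ∧
    ∀ n : ℕ, 4 ≤ n →
      (stripCount 4 n : ℤ) = 2 * stripCount 4 (n - 1) - stripCount 4 (n - 3) := by
  have ha := HexStrip.stripCount_four_succ_add_two
  have hb := HexStrip.card_bands_add_two
  have hb₀ := HexStrip.card_bands_zero
  have hb₁ := HexStrip.card_bands_one
  refine ⟨by linarith [ha 0], by linarith [ha 1, hb 0], by linarith [ha 2, hb 1, hb 0],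
    fun n hn => ?_⟩
  obtain ⟨m, rfl⟩ : ∃ m, n = m + 4 := ⟨n - 4, by omega⟩
  rw [show m + 4 - 1 = m + 3 by omega, show m + 4 - 3 = m + 1 by omega]
  have h₁ := ha (m + 3); have h₂ := ha (m + 2); have h₃ := ha m
  have h₄ := hb (m + 2); have h₅ := hb (m + 1); have h₆ := hb m
  norm_num [add_assoc] at h₁ h₂ h₃ h₄ h₅ h₆ ⊢
  omega
end
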